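/- Let n ≥ 1 and let G₁, …, Gₙ be linearly ordered abelian groups. Define linear orders Lₙ = Gₙ and, recursively for 1 ≤ i < n, Lᵢ = Gᵢ ×ₗ WithTop L_{i+1}. If L₁ is order-isomorphic to ℝ, then Gᵢ is isomorphic, as an ordered group, to ℤ for every 1 ≤ i ≤ n−1, and Gₙ is isomorphic, as an ordered group, to ℝ. -/

import Mathlib

/-!
An order isomorphic to `ℝ` is Dedekind complete, and in a Dedekind complete order an automorphism
moving every point up has unbounded orbits (a bounded orbit would have a supremum `s`, and `τ⁻¹ s`
would be a smaller upper bound). Lifting the translations of the first factor, each `Gᵢ` is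
therefore archimedean.

For `i < n`, density of `Lᵢ` makes `WithTop Lᵢ₊₁` dense, which rules out a least element of it
(otherwise all of `Gᵢ₊₁, …, Gₙ` would be trivial). Then `Gᵢ` is not densely ordered: the points
of `Lᵢ` with negative first coordinate would have no supremum. An archimedean group with a least
positive element `u` is `ℤ`, and `Lᵢ₊₁` is order-isomorphic to the open interval between `(0, ⊤)`
and `(u, ⊤)` in `Lᵢ`, hence to `ℝ`. Finally `Gₙ ≃o ℝ` is archimedean, so it embeds into `ℝ`
(Hölder); the image is a non-cyclic subgroup, hence dense, and Dedekind completeness of `Gₙ`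
makes the embedding onto.
-/

/-- `iterLex G j = G j ×ₗ WithTop (G (j-1) ×ₗ WithTop (⋯ ×ₗ WithTop (G 0)))`. -/
def iterLex (G : ℕ → Type*) : ℕ → Type _
  | 0 => G 0
  | j + 1 => G (j + 1) ×ₗ WithTop (iterLex G j)

instance iterLexLinearOrder (G : ℕ → Type*) [∀ i, LinearOrder (G i)] :
    ∀ j, LinearOrder (iterLex G j)
  | 0 => inferInstanceAs (LinearOrder (G 0))
  | j + 1 =>
      letI := iterLexLinearOrder G j
      @Prod.Lex.instLinearOrder (G (j + 1)) (WithTop (iterLex G j)) _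
        (@WithTop.linearOrder (iterLex G j) (iterLexLinearOrder G j))

open Set

def DedekindComplete (α : Type*) [Preorder α] : Prop :=
  ∀ S : Set α, S.Nonempty → BddAbove S → ∃ s, IsLUB S s

theorem OrderIso.dedekindComplete {α β : Type*} [Preorder α] [ConditionallyCompleteLattice β]
    (e : α ≃o β) : DedekindComplete α := fun S hne hbdd =>
  ⟨e.symm (sSup (e '' S)),
    e.isLUB_image.1 (isLUB_csSup (hne.image e) (e.monotone.map_bddAbove hbdd))⟩

theorem OrderIso.noMaxOrder {α β : Type*} [Preorder α] [Preorder β] [NoMaxOrder β]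
    (e : α ≃o β) : NoMaxOrder α :=
  ⟨fun a => let ⟨b, hb⟩ := exists_gt (e a); ⟨e.symm b, e.lt_symm_apply.2 hb⟩⟩

theorem DedekindComplete.exists_lt_iterate {α : Type*} [LinearOrder α]
    (hα : DedekindComplete α) (τ : α ≃o α) (hτ : ∀ x, x < τ x) (x y : α) :
    ∃ n, y < τ^[n] x := by
  by_contra! hle
  obtain ⟨s, hs⟩ := hα (range fun n => τ^[n] x) (range_nonempty _) ⟨y, forall_mem_range.2 hle⟩
  have hub : τ.symm s ∈ upperBounds (range fun n => τ^[n] x) := forall_mem_range.2 fun n =>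
    τ.le_symm_apply.2 <| by
      simpa only [Function.iterate_succ_apply'] using hs.1 (mem_range_self (n + 1))
  exact (hs.2 hub).not_gt (by simpa using hτ (τ.symm s))

theorem DenselyOrdered.of_withTop {α : Type*} [Preorder α] [DenselyOrdered (WithTop α)] :
    DenselyOrdered α :=
  ⟨fun a b h => by
    obtain ⟨c, h₁, h₂⟩ := exists_between (WithTop.coe_lt_coe.2 h)
    lift c to α using ne_top_of_lt h₂
    exact ⟨c, WithTop.coe_lt_coe.1 h₁, WithTop.coe_lt_coe.1 h₂⟩⟩

theorem DenselyOrdered.of_lex_right {α β : Type*} [PartialOrder α] [Preorder β] [Nonempty α]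
    [DenselyOrdered (α ×ₗ β)] : DenselyOrdered β := by
  obtain ⟨a⟩ := ‹Nonempty α›
  refine ⟨fun b₁ b₂ h => ?_⟩
  obtain ⟨c, h₁, h₂⟩ :=
    exists_between (Prod.Lex.toLex_lt_toLex.2 (Or.inr ⟨rfl, h⟩) : toLex (a, b₁) < toLex (a, b₂))
  have hc : (ofLex c).1 = a :=
    le_antisymm (Prod.Lex.monotone_fst _ _ h₂.le) (Prod.Lex.monotone_fst _ _ h₁.le)
  refine ⟨(ofLex c).2, ?_, ?_⟩
  · simpa [Prod.Lex.lt_iff, hc] using h₁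
  · simpa [Prod.Lex.lt_iff, hc] using h₂

theorem NoMaxOrder.of_lex_orderTop {α β : Type*} [Preorder α] [Preorder β] [OrderTop β]
    [NoMaxOrder (α ×ₗ β)] : NoMaxOrder α :=
  ⟨fun a => by
    obtain ⟨p, hp⟩ := exists_gt (toLex (a, (⊤ : β)))
    rcases Prod.Lex.lt_iff.1 hp with h | ⟨-, h⟩
    · exact ⟨_, h⟩
    · exact absurd h not_top_lt⟩

theorem Real.nonempty_Ioo_orderIso {a b : ℝ} (h : a < b) : Nonempty (Ioo a b ≃o ℝ) := by
  let φ : ℝ ≃o ℝ :=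
    (OrderIso.mulLeft₀ ((b - a) / 2) (by linarith)).trans (OrderIso.addRight ((a + b) / 2))
  have hφ : φ '' Ioo (-1) 1 = Ioo a b := by
    rw [φ.image_Ioo]
    congr 1 <;> simp [φ] <;> ring
  exact ⟨((OrderIso.setCongr _ _ hφ).symm.trans
    (StrictMonoOn.orderIso φ _ (φ.strictMono.strictMonoOn _)).symm).trans
      (orderIsoIooNegOneOne ℝ).symm⟩

section OrderedGroup

variable {G : Type*} [AddCommGroup G] [LinearOrder G]

theorem Archimedean.of_dedekindComplete_of_lift [IsOrderedAddMonoid G] {α : Type*}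
    [LinearOrder α] (hα : DedekindComplete α) (π : α → G) (hπ : Monotone π)
    (hπs : Function.Surjective π) (τ : G → α ≃o α) (hτ : ∀ y p, π (τ y p) = π p + y) :
    Archimedean G := by
  refine ⟨fun x y hy => ?_⟩
  have hlt : ∀ p, p < τ y p := fun p =>
    lt_of_not_ge fun h => (lt_add_of_pos_right (π p) hy).not_ge (hτ y p ▸ hπ h)
  have hiter : ∀ n p, π ((τ y)^[n] p) = π p + n • y := by
    intro n
    induction n with
    | zero => simp
    | succ n ih => intro p; rw [Function.iterate_succ_apply', hτ, ih, succ_nsmul, add_assoc]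
  obtain ⟨p, rfl⟩ := hπs x
  obtain ⟨q, hq⟩ := hπs 0
  obtain ⟨n, hn⟩ := hα.exists_lt_iterate (τ y) hlt q p
  exact ⟨n, by simpa [hiter, hq] using hπ hn.le⟩

theorem exists_isLeast_pos_of_not_denselyOrdered [IsOrderedAddMonoid G]
    (h : ¬DenselyOrdered G) : ∃ u, IsLeast {y : G | 0 < y} u := by
  obtain ⟨a, b, hab, hgap⟩ : ∃ a b : G, a < b ∧ ∀ c, a < c → b ≤ c := by
    by_contra! H
    exact h ⟨H⟩
  exact ⟨b - a, sub_pos.2 hab,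
    fun y hy => sub_le_iff_le_add'.2 (hgap _ (lt_add_of_pos_right a hy))⟩

theorem OrderAddMonoidHom.surjective_of_dedekindComplete [DenselyOrdered G] [Nontrivial G]
    (hG : DedekindComplete G) (f : G →+o ℝ) (hf : Function.Injective f) :
    Function.Surjective f := by
  have hmono : StrictMono f := f.monotone'.strictMono_of_injective hf
  have hpos : ∀ g, 0 < f g ↔ 0 < g := fun g => by simpa using hmono.lt_iff_lt (a := 0) (b := g)
  have hdense : Dense (range f) := by
    change Dense ((f : G →+ ℝ).range : Set ℝ)
    refine AddSubgroup.dense_of_no_min _ (fun hbot => ?_) ?_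
    · obtain ⟨x, hx⟩ := exists_ne (0 : G)
      have : f x ∈ (f : G →+ ℝ).range := ⟨x, rfl⟩
      rw [hbot, AddSubgroup.mem_bot] at this
      exact hx (hf (this.trans (map_zero f).symm))
    · rintro ⟨_, ⟨⟨g, rfl⟩, hg⟩, hmin⟩
      obtain ⟨g', hg'0, hg'g⟩ := exists_between ((hpos g).1 hg)
      exact (hmono hg'g).not_ge (hmin ⟨⟨g', rfl⟩, (hpos g').2 hg'0⟩)
  intro r
  obtain ⟨_, ⟨a, rfl⟩, -, ha⟩ := hdense.exists_between (sub_one_lt r)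
  obtain ⟨_, ⟨b, rfl⟩, hb, -⟩ := hdense.exists_between (lt_add_one r)
  obtain ⟨g, hg⟩ :=
    hG {g | f g < r} ⟨a, ha⟩ ⟨b, fun g hg => (hmono.lt_iff_lt.1 (hg.trans hb)).le⟩
  refine ⟨g, le_antisymm (not_lt.1 fun hlt => ?_) (not_lt.1 fun hlt => ?_)⟩
  · obtain ⟨_, ⟨c, rfl⟩, hrc, hcg⟩ := hdense.exists_between hlt
    exact (hmono.lt_iff_lt.1 hcg).not_ge
      (hg.2 fun g' hg' => (hmono.lt_iff_lt.1 (hg'.trans hrc)).le)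
  · obtain ⟨_, ⟨c, rfl⟩, hgc, hcr⟩ := hdense.exists_between hlt
    exact (hmono.lt_iff_lt.1 hgc).not_ge (hg.1 hcr)

theorem nonempty_orderAddMonoidIso_real_of_orderIso [IsOrderedAddMonoid G] (e : G ≃o ℝ) :
    Nonempty (G ≃+o ℝ) := by
  have hG := e.dedekindComplete
  have : Archimedean G := .of_dedekindComplete_of_lift hG id monotone_id Function.surjective_id
    OrderIso.addRight fun _ _ => rfl
  have : DenselyOrdered G := (denselyOrdered_iff_of_orderIsoClass e).2 inferInstance
  have : Nontrivial G := e.symm.injective.nontrivial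
  obtain ⟨f, hf⟩ := Archimedean.exists_orderAddMonoidHom_real_injective G
  exact ⟨{ AddEquiv.ofBijective (f : G →+ ℝ) ⟨hf, f.surjective_of_dedekindComplete hG hf⟩ with
    map_le_map_iff' := (f.monotone'.strictMono_of_injective hf).le_iff_le }⟩

theorem not_denselyOrdered_of_dedekindComplete_lex [IsOrderedAddMonoid G] [NoMaxOrder G]
    {β : Type*} [LinearOrder β] [Nonempty β] [NoMinOrder β] (h : DedekindComplete (G ×ₗ β)) :
    ¬DenselyOrdered G := by
  intro hG
  obtain ⟨w₀⟩ := ‹Nonempty β›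
  obtain ⟨u, hu⟩ := exists_gt (0 : G)
  have hub : ∀ w, toLex ((0 : G), w) ∈ upperBounds {p : G ×ₗ β | (ofLex p).1 < 0} :=
    fun w p hp => (Prod.Lex.lt_iff.2 (Or.inl hp)).le
  obtain ⟨s, hs⟩ := h _ ⟨toLex (-u, w₀), neg_neg_of_pos hu⟩ ⟨_, hub w₀⟩
  have hs₀ : 0 ≤ (ofLex s).1 := by
    by_contra! hneg
    obtain ⟨c, hsc, hc⟩ := exists_between hneg
    exact hsc.not_ge
      (Prod.Lex.monotone_fst _ _ (hs.1 (show (ofLex (toLex (c, w₀))).1 < 0 from hc)))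
  obtain ⟨w, hw⟩ := exists_lt (ofLex s).2
  have : toLex (0, w) < s := Prod.Lex.lt_iff.2 (hs₀.lt_or_eq.imp id fun h => ⟨h, hw⟩)
  exact this.not_ge (hs.2 (hub w))

theorem Prod.Lex.range_toLex_coe_eq_Ioo {X : Type*} [LinearOrder X] {u : G}
    (hu : IsLeast {y : G | 0 < y} u) :
    range (fun x : X => toLex (u, (x : WithTop X))) = Ioo (toLex (0, ⊤)) (toLex (u, ⊤)) := by
  ext ⟨g, w⟩
  constructor
  · rintro ⟨x, hx⟩
    rw [← hx]
    exact ⟨Prod.Lex.left _ _ hu.1, Prod.Lex.right _ (WithTop.coe_lt_top x)⟩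
  · rintro ⟨h₁, h₂⟩
    rcases Prod.Lex.toLex_lt_toLex.1 h₁ with hg | ⟨-, h⟩
    · rcases Prod.Lex.toLex_lt_toLex.1 h₂ with hgu | ⟨rfl, hw⟩
      · exact absurd (hu.2 hg) hgu.not_ge
      · lift w to X using hw.ne
        exact ⟨w, rfl⟩
    · exact absurd h not_top_lt

theorem Prod.Lex.int_and_real_of_orderIso_real [IsOrderedAddMonoid G] {X : Type*}
    [LinearOrder X] [NoMinOrder (WithTop X)] (e : G ×ₗ WithTop X ≃o ℝ) :
    Nonempty (G ≃+o ℤ) ∧ Nonempty (X ≃o ℝ) := by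
  have hα := e.dedekindComplete
  have : NoMaxOrder (G ×ₗ WithTop X) := e.noMaxOrder
  have : NoMaxOrder G := .of_lex_orderTop (β := WithTop X)
  have : Archimedean G := .of_dedekindComplete_of_lift hα (fun p => (ofLex p).1)
    Prod.Lex.monotone_fst_ofLex (fun g => ⟨toLex (g, ⊤), rfl⟩)
    (fun y => Prod.Lex.prodLexCongr (OrderIso.addRight y) (OrderIso.refl _)) fun _ _ => rfl
  obtain ⟨u, hu⟩ := exists_isLeast_pos_of_not_denselyOrdered
    (not_denselyOrdered_of_dedekindComplete_lex hα)
  refine ⟨⟨LinearOrderedAddCommGroup.int_orderAddMonoidIso_of_isLeast_pos hu⟩, ?_⟩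
  let F : X → ℝ := fun x => e (toLex (u, (x : WithTop X)))
  have hF : StrictMono F :=
    e.strictMono.comp fun x y h => Prod.Lex.right _ (WithTop.coe_lt_coe.2 h)
  have hrange : range F = Ioo (e (toLex (0, ⊤))) (e (toLex (u, ⊤))) := by
    rw [range_comp' e, Prod.Lex.range_toLex_coe_eq_Ioo hu, e.image_Ioo]
  obtain ⟨ψ⟩ := Real.nonempty_Ioo_orderIso (e.lt_iff_lt.2 (Prod.Lex.left _ _ hu.1))
  exact ⟨(StrictMono.orderIso F hF).trans ((OrderIso.setCongr _ _ hrange).trans ψ)⟩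

theorem OrderAddMonoidIso.exists_addEquiv_le_iff {H : Type*} [AddCommGroup H] [LinearOrder H]
    (e : G ≃+o H) : ∃ f : G ≃+ H, ∀ x y : G, x ≤ y ↔ f x ≤ f y :=
  ⟨e.toAddEquiv, fun _ _ => (map_le_map_iff e).symm⟩

end OrderedGroup

section iterLex

variable (G : ℕ → Type*) [∀ i, AddCommGroup (G i)] [∀ i, LinearOrder (G i)]
  [∀ i, IsOrderedAddMonoid (G i)]

theorem iterLex.noMinOrder_withTop :
    ∀ k, DenselyOrdered (WithTop (iterLex G k)) → NoMinOrder (WithTop (iterLex G k))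
  | 0, h => by
    change NoMinOrder (WithTop (G 0))
    have : DenselyOrdered (WithTop (G 0)) := h
    rcases subsingleton_or_nontrivial (G 0) with _ | _
    · obtain ⟨c, h₁, h₂⟩ := exists_between (WithTop.coe_lt_top (0 : G 0))
      lift c to G 0 using ne_top_of_lt h₂
      exact absurd (Subsingleton.elim c 0) (WithTop.coe_lt_coe.1 h₁).ne'
    · infer_instance
  | k + 1, h => by
    change NoMinOrder (WithTop (G (k + 1) ×ₗ WithTop (iterLex G k)))
    have : DenselyOrdered (WithTop (G (k + 1) ×ₗ WithTop (iterLex G k))) := h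
    have : DenselyOrdered (G (k + 1) ×ₗ WithTop (iterLex G k)) := .of_withTop
    have := iterLex.noMinOrder_withTop k (.of_lex_right (α := G (k + 1)))
    infer_instance

theorem iterLex.int_and_real_of_orderIso_real : ∀ k, (iterLex G k ≃o ℝ) →
    Nonempty (G 0 ≃+o ℝ) ∧ ∀ j, 1 ≤ j → j ≤ k → Nonempty (G j ≃+o ℤ)
  | 0, e => ⟨nonempty_orderAddMonoidIso_real_of_orderIso e, fun j h₁ h₂ => by omega⟩
  | k + 1, e => by
    let e' : G (k + 1) ×ₗ WithTop (iterLex G k) ≃o ℝ := e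
    have : DenselyOrdered (G (k + 1) ×ₗ WithTop (iterLex G k)) :=
      (denselyOrdered_iff_of_orderIsoClass e').2 inferInstance
    have := iterLex.noMinOrder_withTop G k (.of_lex_right (α := G (k + 1)))
    obtain ⟨hZ, ⟨eX⟩⟩ := Prod.Lex.int_and_real_of_orderIso_real e'
    obtain ⟨hR, hj⟩ := iterLex.int_and_real_of_orderIso_real k eX
    refine ⟨hR, fun j h₁ h₂ => ?_⟩
    rcases h₂.lt_or_eq with h₂ | rfl
    · exact hj j h₁ (Nat.lt_succ_iff.1 h₂)
    · exact hZ

end iterLex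

theorem stmt_13_general (n : ℕ) (G : ℕ → Type*)
    [∀ i, AddCommGroup (G i)] [∀ i, LinearOrder (G i)] [∀ i, IsOrderedAddMonoid (G i)]
    (h : Nonempty (iterLex (fun j => G (n - j)) (n - 1) ≃o ℝ)) :
    (∀ i, 1 ≤ i → i ≤ n - 1 → ∃ f : G i ≃+ ℤ, ∀ x y : G i, x ≤ y ↔ f x ≤ f y) ∧
    (∃ f : G n ≃+ ℝ, ∀ x y : G n, x ≤ y ↔ f x ≤ f y) := by
  obtain ⟨e⟩ := h
  obtain ⟨⟨fR⟩, hZ⟩ := iterLex.int_and_real_of_orderIso_real (fun j => G (n - j)) (n - 1) e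
  refine ⟨fun i h₁ h₂ => ?_, fR.exists_addEquiv_le_iff⟩
  obtain ⟨fZ⟩ := hZ (n - i) (by omega) (by omega)
  rw [Nat.sub_sub_self (by omega)] at fZ
  exact fZ.exists_addEquiv_le_iff

/-- let `n ≥ 1` and `G 1, …, G n` be linearly ordered abelian groups, and
let `L i = G i ×ₗ WithTop (L (i+1))` with `L n = G n`; so
`L 1 = iterLex (fun j => G (n - j)) (n - 1)`.  If `L 1` is order-isomorphic to `ℝ` then
`G i` is isomorphic as an ordered group to `ℤ` for `1 ≤ i ≤ n - 1`, and `G n` is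
isomorphic as an ordered group to `ℝ`. -/
theorem stmt_13 (n : ℕ) (hn : 1 ≤ n) (G : ℕ → Type*)
    [∀ i, AddCommGroup (G i)] [∀ i, LinearOrder (G i)] [∀ i, IsOrderedAddMonoid (G i)]
    (h : Nonempty (iterLex (fun j => G (n - j)) (n - 1) ≃o ℝ)) :
    (∀ i, 1 ≤ i → i ≤ n - 1 → ∃ f : G i ≃+ ℤ, ∀ x y : G i, x ≤ y ↔ f x ≤ f y) ∧
    (∃ f : G n ≃+ ℝ, ∀ x y : G n, x ≤ y ↔ f x ≤ f y) :=
  stmt_13_general n G h
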